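/- Let $I, J \in \mathscr{D}^{\omega}$ with $I$ good (with parameters $r \in \mathbb{Z}_+$ and $\gamma = \frac{1}{2(\lambda+1)}$ for some $\lambda > 0$), $I \cap J = \emptyset$, $\ell(I) \leq \ell(J)$, and suppose $\mathrm{dist}(I,J) > \ell(J)\,(\ell(I)/\ell(J))^{1/(2(\lambda+1))}$. If $K = I \vee J$ is the smallest cube of $\mathscr{D}^{\omega}$ containing both $I$ and $J$, then $\ell(K)\,(\ell(I)/\ell(K))^{1/(2(\lambda+1))} \leq 2^r \,\mathrm{dist}(I,J)$. -/

import Mathlib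

open MeasureTheory ENNReal Set
noncomputable section

/-- An axis-parallel cube in `ℝⁿ`, given by its lower-left corner and (positive) side length. -/
structure Cube (n : ℕ) where
  corner : EuclideanSpace ℝ (Fin n)
  side : ℝ
  side_pos : 0 < side

namespace Cube
variable {n : ℕ}

/-- The (half-open) cube as a subset of `ℝⁿ`. -/
def set (I : Cube n) : Set (EuclideanSpace ℝ (Fin n)) :=
  {x | ∀ i, I.corner i ≤ x i ∧ x i < I.corner i + I.side}

/-- The volume `|I| = ℓ(I)^n` of the cube. -/
def vol (I : Cube n) : ℝ := I.side ^ n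

/-- The center of the cube. -/
def center (I : Cube n) : EuclideanSpace ℝ (Fin n) := WithLp.toLp 2 (fun i => I.corner i + I.side / 2)

end Cube

/-- A dyadic grid in `ℝⁿ`: all cubes have dyadic side lengths, the cubes of each fixed
side length `2^(-k)` partition `ℝⁿ`, and any two cubes are nested or disjoint. -/
def IsDyadicGrid {n : ℕ} (D : _root_.Set (Cube n)) : Prop :=
  (∀ I ∈ D, ∃ k : ℤ, I.side = (2 : ℝ) ^ (-k)) ∧
  (∀ k : ℤ, ∀ x : EuclideanSpace ℝ (Fin n),
    ∃! I : Cube n, I ∈ D ∧ I.side = (2 : ℝ) ^ (-k) ∧ x ∈ I.set) ∧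
  (∀ I ∈ D, ∀ J ∈ D, I.set ⊆ J.set ∨ J.set ⊆ I.set ∨ Disjoint I.set J.set)

/-- One-dimensional Haar function on the interval `[c, c+s)`; `η = false` gives the
non-cancellative `h⁰ = s^{-1/2} 1`, `η = true` the cancellative `h¹`. -/
def haar1 (c s : ℝ) (η : Bool) (t : ℝ) : ℝ :=
  if η then
    (if t ∈ Set.Ico c (c + s / 2) then s ^ (-(1:ℝ)/2)
     else if t ∈ Set.Ico (c + s / 2) (c + s) then -(s ^ (-(1:ℝ)/2)) else 0)
  else (if t ∈ Set.Ico c (c + s) then s ^ (-(1:ℝ)/2) else 0)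

/-- Tensor-product Haar function `h_I^η` on a cube `I ⊂ ℝⁿ`, with signature `η`. -/
def haarCube {n : ℕ} (I : Cube n) (η : Fin n → Bool) (x : EuclideanSpace ℝ (Fin n)) : ℝ :=
  ∏ i, haar1 (I.corner i) I.side (η i) (x i)

/-- The average `⟨g⟩_I = |I|⁻¹ ∫_I g`. -/
def cavg {n : ℕ} (g : EuclideanSpace ℝ (Fin n) → ℝ) (I : Cube n) : ℝ :=
  (1 / I.vol) * ∫ x in I.set, g x

/-- The martingale difference `Δ_I g = ∑_{I' child of I} ⟨g⟩_{I'} 1_{I'} - ⟨g⟩_I 1_I`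
associated with a cube `I` of the dyadic grid `D`. -/
def mdiff {n : ℕ} (D : _root_.Set (Cube n)) (I : Cube n)
    (g : EuclideanSpace ℝ (Fin n) → ℝ) (x : EuclideanSpace ℝ (Fin n)) : ℝ :=
  (∑' I' : {I' : Cube n // I' ∈ D ∧ I'.set ⊆ I.set ∧ I'.side = I.side / 2},
    Set.indicator I'.1.set (fun _ => cavg g I'.1) x) -
  Set.indicator I.set (fun _ => cavg g I) x

/-- The distance between two sets. -/
def setDist {α : Type*} [PseudoMetricSpace α] (A B : _root_.Set α) : ℝ :=
  sInf (Set.image2 dist A B)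

/-- The mixed norm `‖f‖_{L^{p₂}(L^{p₁})(μ₂ × μ₁)}` of an `ℝ≥0∞`-valued function,
inner exponent `p₁` (first variable), outer exponent `p₂` (second variable). -/
def mnorm {E F : Type*} [MeasurableSpace E] [MeasurableSpace F] (p₁ p₂ : ℝ)
    (μ₁ : Measure E) (μ₂ : Measure F) (g : E → F → ℝ≥0∞) : ℝ≥0∞ :=
  (∫⁻ x₂, (∫⁻ x₁, g x₁ x₂ ^ p₁ ∂μ₁) ^ (p₂ / p₁) ∂μ₂) ^ (1 / p₂)

/-- The measure `w^e dx` on `ℝⁿ`. -/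
def wMeasure {n : ℕ} (w : EuclideanSpace ℝ (Fin n) → ℝ) (e : ℝ) :
    Measure (EuclideanSpace ℝ (Fin n)) :=
  volume.withDensity fun x => ENNReal.ofReal (w x ^ e)

/-- `v ∈ A_r(ℝⁿ)` with constant at most `A`:
`⟨v⟩_Q ⟨v^{1-r'}⟩_Q^{r-1} ≤ A` for every cube `Q`. -/
def MemAp {n : ℕ} (r : ℝ) (v : EuclideanSpace ℝ (Fin n) → ℝ) (A : ℝ) : Prop :=
  ∀ Q : Cube n, cavg v Q * (cavg (fun x => v x ^ (1 - r / (r - 1))) Q) ^ (r - 1) ≤ A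

/-- The `A_{a,b}` characteristic `[w]_{A_{a,b}} = sup_Q ⟨w^b⟩_Q ⟨w^{-a'}⟩_Q^{b/a'}`. -/
def ApqConst {n : ℕ} (a b : ℝ) (w : EuclideanSpace ℝ (Fin n) → ℝ) : ℝ≥0∞ :=
  ⨆ Q : Cube n, ENNReal.ofReal
    (cavg (fun x => w x ^ b) Q * (cavg (fun x => w x ^ (-(a / (a - 1)))) Q) ^ (b * (a - 1) / a))

/-- A cube `I` of the dyadic grid `D` is *good* with parameters `r` and `γ` if there is no
`J' ∈ D` with `ℓ(J') ≥ 2^r ℓ(I)` and `dist(I, ∂J') ≤ ℓ(J') (ℓ(I)/ℓ(J'))^γ`. -/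
def IsGoodCube {n : ℕ} (D : _root_.Set (Cube n)) (r : ℕ) (γ : ℝ) (I : Cube n) : Prop :=
  ¬ ∃ J' ∈ D, (2:ℝ) ^ r * I.side ≤ J'.side ∧
    setDist I.set (frontier J'.set) ≤ J'.side * (I.side / J'.side) ^ γ

/-!
If `ℓ(K) ≤ 2^r ℓ(I)`, the estimate follows from `dist(I, J) ≥ ℓ(I)`, which the separation
hypothesis gives since `γ ≤ 1`. Otherwise the child `K₁` of `K` containing `I` still has
`ℓ(K₁) ≥ 2^r ℓ(I)` (side lengths are dyadic), and it misses `J` by minimality of `K`. Goodness of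
`I` gives `ℓ(K₁)(ℓ(I)/ℓ(K₁))^γ < dist(I, ∂K₁) ≤ dist(I, J)`, and passing from `K₁` to `K` costs a
factor `2 ≤ 2^r`.
-/

namespace Cube
variable {n : ℕ}

lemma corner_mem_set (I : Cube n) : I.corner ∈ I.set :=
  fun _ => ⟨le_rfl, lt_add_of_pos_right _ I.side_pos⟩

lemma set_nonempty (I : Cube n) : I.set.Nonempty :=
  ⟨I.corner, I.corner_mem_set⟩

/-- Moving the corner of `I` by `ℓ(K)` along a coordinate axis stays inside `I`
if `ℓ(K) < ℓ(I)`, but leaves `K`. -/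
lemma side_le_of_set_subset (hn : 0 < n) {I K : Cube n} (h : I.set ⊆ K.set) :
    I.side ≤ K.side := by
  by_contra! hlt
  let i₀ : Fin n := ⟨0, hn⟩
  let x : EuclideanSpace ℝ (Fin n) :=
    WithLp.toLp 2 (fun j => I.corner j + if j = i₀ then K.side else 0)
  have hxI : x ∈ I.set := by
    intro j
    by_cases hj : j = i₀
    · simp only [x, hj, if_true]
      exact ⟨by linarith [K.side_pos], by linarith⟩
    · simp [x, hj, I.side_pos]
  have hx_out := (h hxI i₀).2
  have hcorner := (h I.corner_mem_set i₀).1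
  simp only [x, if_true] at hx_out
  linarith

end Cube

section SetDist
variable {α : Type*} [PseudoMetricSpace α] {A B : Set α}

lemma setDist_le_dist {x y : α} (hx : x ∈ A) (hy : y ∈ B) : setDist A B ≤ dist x y :=
  csInf_le ⟨0, by rintro _ ⟨a, -, b, -, rfl⟩; exact dist_nonneg⟩ (mem_image2_of_mem hx hy)

lemma le_setDist (hA : A.Nonempty) (hB : B.Nonempty) {c : ℝ}
    (h : ∀ x ∈ A, ∀ y ∈ B, c ≤ dist x y) : c ≤ setDist A B :=
  le_csInf (hA.image2 hB) (by rintro _ ⟨a, ha, b, hb, rfl⟩; exact h a ha b hb)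

lemma setDist_nonneg : 0 ≤ setDist A B :=
  Real.sInf_nonneg (by rintro _ ⟨a, -, b, -, rfl⟩; exact dist_nonneg)

end SetDist

lemma IsPreconnected.inter_frontier_nonempty {X : Type*} [TopologicalSpace X] {s t : Set X}
    (hs : IsPreconnected s) (hin : (s ∩ t).Nonempty) (hout : (s \ t).Nonempty) :
    (s ∩ frontier t).Nonempty := by
  by_contra! hempty
  have hcover : s ⊆ interior t ∪ (closure t)ᶜ := by
    intro z hz
    by_cases hzc : z ∈ closure t
    · exact Or.inl (by_contra fun hzi => hempty.subset ⟨hz, hzc, hzi⟩)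
    · exact Or.inr hzc
  obtain ⟨x, hxs, hxt⟩ := hin
  obtain ⟨y, hys, hyt⟩ := hout
  have hx : x ∈ interior t :=
    (hcover hxs).resolve_right (not_not_intro (subset_closure hxt))
  have hy : y ∈ (closure t)ᶜ := (hcover hys).resolve_left fun hyi => hyt (interior_subset hyi)
  obtain ⟨z, -, hz_int, hz_ext⟩ := hs _ _ isOpen_interior isClosed_closure.isOpen_compl hcover
    ⟨x, hxs, hx⟩ ⟨y, hys, hy⟩
  exact hz_ext (interior_subset_closure hz_int)

/-- The segment from a point of `A ⊆ s` to a point of `B` outside `s` crosses `∂s`. -/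
lemma setDist_frontier_le_setDist {E : Type*} [NormedAddCommGroup E] [NormedSpace ℝ E]
    {A B s : Set E} (hA : A.Nonempty) (hB : B.Nonempty) (hAs : A ⊆ s) (hBs : Disjoint B s) :
    setDist A (frontier s) ≤ setDist A B := by
  refine le_setDist hA hB fun x hx y hy => ?_
  obtain ⟨z, hz_seg, hz_fr⟩ := (convex_segment x y).isPreconnected.inter_frontier_nonempty
    ⟨x, left_mem_segment ℝ x y, hAs hx⟩
    ⟨y, right_mem_segment ℝ x y, disjoint_left.mp hBs hy⟩
  calc setDist A (frontier s) ≤ dist x z := setDist_le_dist hx hz_fr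
    _ ≤ dist x y := by
      rw [← dist_add_dist_of_mem_segment hz_seg]
      exact le_add_of_nonneg_right dist_nonneg

section Majorant
variable {a L γ : ℝ}

lemma mul_rpow_div_le_self (ha : 0 ≤ a) (haL : a ≤ L) (hγ : 0 ≤ γ) :
    L * (a / L) ^ γ ≤ L := by
  have hL : 0 ≤ L := ha.trans haL
  exact mul_le_of_le_one_right hL
    (Real.rpow_le_one (div_nonneg ha hL) (div_le_one_of_le₀ haL hL) hγ)

lemma le_mul_rpow_div (ha : 0 ≤ a) (haL : a ≤ L) (hγ : γ ≤ 1) :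
    a ≤ L * (a / L) ^ γ := by
  rcases (ha.trans haL).eq_or_lt with rfl | hL
  · simp [le_antisymm haL ha]
  calc a = L * (a / L) := by field_simp
    _ ≤ L * (a / L) ^ γ := by
      gcongr
      exact Real.self_le_rpow_of_le_one (div_nonneg ha hL.le) (div_le_one_of_le₀ haL hL.le) hγ

/-- Halving `L` can only increase `(a / L) ^ γ`. -/
lemma mul_rpow_div_le_two_mul_half (ha : 0 ≤ a) (hL : 0 < L) (hγ : 0 ≤ γ) :
    L * (a / L) ^ γ ≤ 2 * (L / 2 * (a / (L / 2)) ^ γ) := by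
  have hbase : a / L ≤ a / (L / 2) := div_le_div_of_nonneg_left ha (by positivity) (by linarith)
  calc L * (a / L) ^ γ ≤ L * (a / (L / 2)) ^ γ := by gcongr
    _ = 2 * (L / 2 * (a / (L / 2)) ^ γ) := by ring

end Majorant

lemma two_zpow_le_half_of_lt {a b : ℤ} (h : (2 : ℝ) ^ a < 2 ^ b) : (2 : ℝ) ^ a ≤ 2 ^ b / 2 := by
  have hab : a ≤ b - 1 := by
    have := (zpow_lt_zpow_iff_right₀ (one_lt_two (α := ℝ))).mp h
    omega
  calc (2 : ℝ) ^ a ≤ 2 ^ (b - 1) := zpow_le_zpow_right₀ one_le_two hab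
    _ = 2 ^ b / 2 := by rw [zpow_sub_one₀ two_ne_zero, div_eq_mul_inv]

namespace IsDyadicGrid
variable {n : ℕ} {D : Set (Cube n)} {I J K : Cube n}

lemma two_pow_mul_side_le_half (hD : IsDyadicGrid D) (hI : I ∈ D) (hK : K ∈ D) {r : ℕ}
    (h : 2 ^ r * I.side < K.side) : 2 ^ r * I.side ≤ K.side / 2 := by
  obtain ⟨m, hm⟩ := hD.1 I hI
  obtain ⟨k, hk⟩ := hD.1 K hK
  rw [hm, hk, ← zpow_natCast, ← zpow_add₀ two_ne_zero] at h ⊢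
  exact two_zpow_le_half_of_lt h

lemma exists_mem_side_eq_half (hD : IsDyadicGrid D) (hK : K ∈ D) (x : EuclideanSpace ℝ (Fin n)) :
    ∃ K₁ ∈ D, K₁.side = K.side / 2 ∧ x ∈ K₁.set := by
  obtain ⟨k, hk⟩ := hD.1 K hK
  obtain ⟨K₁, ⟨hK₁, hside, hx⟩, -⟩ := hD.2.1 (k + 1) x
  refine ⟨K₁, hK₁, ?_, hx⟩
  rw [hside, hk, neg_add, zpow_add₀ two_ne_zero, zpow_neg_one, div_eq_mul_inv]

lemma set_subset_of_side_lt (hn : 0 < n) (hD : IsDyadicGrid D) (hI : I ∈ D) (hK : K ∈ D)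
    (hside : I.side < K.side) (hcorner : I.corner ∈ K.set) : I.set ⊆ K.set := by
  rcases hD.2.2 I hI K hK with hIK | hKI | hIK
  · exact hIK
  · exact absurd (Cube.side_le_of_set_subset hn hKI) (not_le.mpr hside)
  · exact absurd hcorner (disjoint_left.mp hIK I.corner_mem_set)

lemma exists_half_superset_disjoint (hn : 0 < n) (hD : IsDyadicGrid D)
    (hI : I ∈ D) (hJ : J ∈ D) (hK : K ∈ D) (hdisj : Disjoint I.set J.set)
    (hmin : ∀ K' ∈ D, I.set ⊆ K'.set → J.set ⊆ K'.set → K.set ⊆ K'.set)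
    (hside : I.side < K.side / 2) :
    ∃ K₁ ∈ D, K₁.side = K.side / 2 ∧ I.set ⊆ K₁.set ∧ Disjoint J.set K₁.set := by
  obtain ⟨K₁, hK₁, hK₁side, hcorner⟩ := hD.exists_mem_side_eq_half hK I.corner
  have hIK₁ : I.set ⊆ K₁.set := hD.set_subset_of_side_lt hn hI hK₁ (hK₁side ▸ hside) hcorner
  refine ⟨K₁, hK₁, hK₁side, hIK₁, ?_⟩
  rcases hD.2.2 J hJ K₁ hK₁ with hJK₁ | hK₁J | hJK₁
  · have := Cube.side_le_of_set_subset hn (hmin K₁ hK₁ hIK₁ hJK₁)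
    linarith [K.side_pos]
  · exact absurd (hK₁J (hIK₁ I.corner_mem_set)) (disjoint_left.mp hdisj I.corner_mem_set)
  · exact hJK₁

end IsDyadicGrid

lemma IsGoodCube.lt_setDist_frontier {n r : ℕ} {γ : ℝ} {D : Set (Cube n)} {I J' : Cube n}
    (hgood : IsGoodCube D r γ I) (hJ' : J' ∈ D) (hside : 2 ^ r * I.side ≤ J'.side) :
    J'.side * (I.side / J'.side) ^ γ < setDist I.set (frontier J'.set) :=
  not_le.mp fun hle => hgood ⟨J', hJ', hside, hle⟩

theorem good_cube_majorant_estimate_general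
    (n : ℕ) (hn : 0 < n) (lam : ℝ) (hlam : 0 < lam) (r : ℕ) (hr : 0 < r)
    (D : _root_.Set (Cube n)) (hD : IsDyadicGrid D)
    (I J K : Cube n) (hI : I ∈ D) (hJ : J ∈ D) (hK : K ∈ D)
    (hgood : IsGoodCube D r (1 / (2 * (lam + 1))) I)
    (hdisj : Disjoint I.set J.set) (hside : I.side ≤ J.side)
    (hsep : J.side * (I.side / J.side) ^ (1 / (2 * (lam + 1))) < setDist I.set J.set)
    (hIK : I.set ⊆ K.set)
    (hmin : ∀ K' ∈ D, I.set ⊆ K'.set → J.set ⊆ K'.set → K.set ⊆ K'.set) :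
    K.side * (I.side / K.side) ^ (1 / (2 * (lam + 1))) ≤ 2 ^ r * setDist I.set J.set := by
  set γ := 1 / (2 * (lam + 1))
  have hγ₀ : 0 ≤ γ := by positivity
  have hγ₁ : γ ≤ 1 := by rw [div_le_one (by positivity)]; linarith
  have hI₀ := I.side_pos.le
  have hIJ : I.side ≤ setDist I.set J.set := (le_mul_rpow_div hI₀ hside hγ₁).trans hsep.le
  have h2r : (2 : ℝ) ≤ 2 ^ r := le_self_pow₀ one_le_two hr.ne'
  rcases le_or_gt K.side (2 ^ r * I.side) with hsmall | hlarge
  · calc K.side * (I.side / K.side) ^ γ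
        ≤ K.side := mul_rpow_div_le_self hI₀ (Cube.side_le_of_set_subset hn hIK) hγ₀
      _ ≤ 2 ^ r * I.side := hsmall
      _ ≤ 2 ^ r * setDist I.set J.set := by gcongr
  · have hhalf := hD.two_pow_mul_side_le_half hI hK hlarge
    obtain ⟨K₁, hK₁, hK₁side, hIK₁, hJK₁⟩ := hD.exists_half_superset_disjoint hn hI hJ hK
      hdisj hmin (by nlinarith [I.side_pos])
    calc K.side * (I.side / K.side) ^ γ
        ≤ 2 * (K₁.side * (I.side / K₁.side) ^ γ) :=
          hK₁side ▸ mul_rpow_div_le_two_mul_half hI₀ K.side_pos hγ₀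
      _ ≤ 2 * setDist I.set (frontier K₁.set) := by
          gcongr; exact (hgood.lt_setDist_frontier hK₁ (hK₁side ▸ hhalf)).le
      _ ≤ 2 * setDist I.set J.set := by
          gcongr; exact setDist_frontier_le_setDist I.set_nonempty J.set_nonempty hIK₁ hJK₁
      _ ≤ 2 ^ r * setDist I.set J.set := by gcongr; exact setDist_nonneg

/-- (Hytönen's majorant lemma, separated case.) Let `I, J ∈ 𝒟^ω` with `I`
good (parameters `r`, `γ = 1/(2(λ+1))`), `I ∩ J = ∅`, `ℓ(I) ≤ ℓ(J)`, and
`dist(I,J) > ℓ(J)(ℓ(I)/ℓ(J))^{1/(2(λ+1))}`. If `K = I ∨ J` is the smallest cube of the grid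
containing both, then `ℓ(K)(ℓ(I)/ℓ(K))^{1/(2(λ+1))} ≤ 2^r dist(I,J)`. -/
theorem good_cube_majorant_estimate
    (n : ℕ) (hn : 0 < n) (lam : ℝ) (hlam : 0 < lam) (r : ℕ) (hr : 0 < r)
    (D : _root_.Set (Cube n)) (hD : IsDyadicGrid D)
    (I J K : Cube n) (hI : I ∈ D) (hJ : J ∈ D) (hK : K ∈ D)
    (hgood : IsGoodCube D r (1 / (2 * (lam + 1))) I)
    (hdisj : Disjoint I.set J.set) (hside : I.side ≤ J.side)
    (hsep : J.side * (I.side / J.side) ^ (1 / (2 * (lam + 1))) < setDist I.set J.set)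
    (hIK : I.set ⊆ K.set) (hJK : J.set ⊆ K.set)
    (hmin : ∀ K' ∈ D, I.set ⊆ K'.set → J.set ⊆ K'.set → K.set ⊆ K'.set) :
    K.side * (I.side / K.side) ^ (1 / (2 * (lam + 1))) ≤ 2 ^ r * setDist I.set J.set :=
  good_cube_majorant_estimate_general n hn lam hlam r hr D hD I J K hI hJ hK hgood hdisj hside hsep
    hIK hmin
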